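/- The matrix C satisfies: (1) the positive vector v with components v i = 1 − b i lies in the left kernel of C, i.e. Cᵀ.mulVec v = 0 (equivalently vᵀ C = 0), so 0 is an eigenvalue of C; (2) every diagonal entry satisfies C i i ≥ 0; and (3) every off-diagonal entry satisfies C i j ≤ 0 for i ≠ j. -/

import Mathlib

/-!
The rows of `K = F diag(b)` sum to less than `1`, so `‖K‖∞ < 1` and `S = (1 - K)⁻¹ F` is the
Neumann series `∑ₘ Kᵐ F`, hence entrywise nonnegative; since
`F (1 - b) = (1 - K) 1` it satisfies `S (1 - b) = 1`. Writing `v = 1 - b` and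
`P = A + R = diag(v) S`, we get `C = 1 - Pᵀ` with `P` nonnegative and `P v = v`.
So `v` is a positive left null vector of `C`, the off-diagonal entries `-P j i` of `C` are
nonpositive, and `P i i v i ≤ (P v) i = v i` gives `P i i ≤ 1`, i.e. `C i i ≥ 0`.
-/

open Matrix

theorem sum_mul_lt_one_of_sum_eq_one {ι : Type*} [Fintype ι] {w b : ι → ℝ}
    (hw0 : ∀ j, 0 ≤ w j) (hw1 : ∑ j, w j = 1) (hb : ∀ j, b j < 1) : ∑ j, w j * b j < 1 := by
  obtain ⟨j, -, hj⟩ := Finset.exists_ne_zero_of_sum_ne_zero (hw1 ▸ one_ne_zero)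
  calc ∑ j, w j * b j < ∑ j, w j :=
        Finset.sum_lt_sum (fun k _ => mul_le_of_le_one_right (hw0 k) (hb k).le)
          ⟨j, Finset.mem_univ j, mul_lt_of_lt_one_right ((hw0 j).lt_of_ne' hj) (hb j)⟩
    _ = 1 := hw1

namespace Matrix

variable {ι : Type*} [Fintype ι]

section LinftyNorm

attribute [local instance] Matrix.linftyOpNormedAddCommGroup Matrix.linftyOpNormedRing
  Matrix.linftyOpNormedAlgebra

theorem linfty_opNorm_lt_one_of_sum_lt_one {K : Matrix ι ι ℝ} (hK0 : ∀ i j, 0 ≤ K i j)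
    (hK : ∀ i, ∑ j, K i j < 1) : ‖K‖ < 1 := by
  rw [linfty_opNorm_def, ← NNReal.coe_one, NNReal.coe_lt_coe, Finset.sup_lt_iff zero_lt_one]
  intro i _
  rw [← NNReal.coe_lt_coe]
  push_cast
  simpa only [Real.norm_of_nonneg (hK0 i _)] using hK i

theorem isUnit_one_sub_of_sum_lt_one [DecidableEq ι] {K : Matrix ι ι ℝ}
    (hK0 : ∀ i j, 0 ≤ K i j) (hK : ∀ i, ∑ j, K i j < 1) : IsUnit (1 - K) :=
  (Units.oneSub K (linfty_opNorm_lt_one_of_sum_lt_one hK0 hK)).isUnit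

theorem inv_one_sub_apply_nonneg [DecidableEq ι] {K : Matrix ι ι ℝ}
    (hK0 : ∀ i j, 0 ≤ K i j) (hK : ∀ i, ∑ j, K i j < 1) (i j : ι) : 0 ≤ (1 - K)⁻¹ i j := by
  have hsum := hasSum_geom_series_inverse K (linfty_opNorm_lt_one_of_sum_lt_one hK0 hK)
  rw [nonsing_inv_eq_ringInverse]
  exact hasSum_le (fun m => pow_apply_nonneg hK0 m i j) hasSum_zero
    (Pi.hasSum.mp (Pi.hasSum.mp hsum i) j)

end LinftyNorm

theorem inv_one_sub_mul_diagonal_mul_mulVec_one_sub [DecidableEq ι] {F : Matrix ι ι ℝ}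
    {b : ι → ℝ} (hF : ∀ i, ∑ j, F i j = 1) (hunit : IsUnit (1 - F * diagonal b)) :
    ((1 - F * diagonal b)⁻¹ * F) *ᵥ (1 - b) = 1 := by
  have hFb : F *ᵥ (1 - b) = (1 - F * diagonal b) *ᵥ 1 := by
    ext i
    simp [mulVec, dotProduct, mul_sub, one_apply, hF]
  rw [← mulVec_mulVec, hFb, mulVec_mulVec,
    nonsing_inv_mul _ ((isUnit_iff_isUnit_det _).mp hunit), one_mulVec]

section CommRing

variable {R : Type*} [CommRing R]

theorem diagonal_mul_mulVec_self [DecidableEq ι] {S : Matrix ι ι R} {v : ι → R}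
    (h : S *ᵥ v = 1) : (diagonal v * S) *ᵥ v = v := by
  rw [← mulVec_mulVec, h]
  ext i
  simp [mulVec_diagonal]

theorem vecMul_one_sub_transpose_eq_zero [DecidableEq ι] {P : Matrix ι ι R} {v : ι → R}
    (h : P *ᵥ v = v) : v ᵥ* (1 - Pᵀ) = 0 := by
  rw [vecMul_sub, vecMul_one, vecMul_transpose, h, sub_self]

end CommRing

theorem zero_mem_spectrum_of_vecMul_eq_zero [DecidableEq ι] {𝕜 : Type*} [Field 𝕜]
    {C : Matrix ι ι 𝕜} {v : ι → 𝕜} (hv : v ≠ 0) (h : v ᵥ* C = 0) : 0 ∈ spectrum 𝕜 C := by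
  rw [spectrum.zero_mem_iff, isUnit_iff_isUnit_det, isUnit_iff_ne_zero, not_not]
  exact exists_vecMul_eq_zero_iff.mp ⟨v, hv, h⟩

theorem apply_self_le_one_of_mulVec_eq_self {P : Matrix ι ι ℝ} {v : ι → ℝ}
    (hP : ∀ i j, 0 ≤ P i j) (hv : ∀ i, 0 < v i) (h : P *ᵥ v = v) (i : ι) : P i i ≤ 1 := by
  have hle : P i i * v i ≤ v i :=
    calc P i i * v i ≤ ∑ j, P i j * v j :=
          Finset.single_le_sum (fun j _ => mul_nonneg (hP i j) (hv j).le) (Finset.mem_univ i)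
      _ = v i := congrFun h i
  exact (mul_le_iff_le_one_left (hv i)).mp hle

end Matrix

theorem stmt_13_general (n : ℕ) (hn : 1 ≤ n)
    (F : Matrix (Fin n) (Fin n) ℝ)
    (hFnonneg : ∀ i j, 0 ≤ F i j)
    (hFrow : ∀ i, ∑ j, F i j = 1)
    (b : Fin n → ℝ) (hb0 : ∀ j, 0 ≤ b j) (hb1 : ∀ j, b j < 1)
    (K : Matrix (Fin n) (Fin n) ℝ)
    (hK : ∀ i j, K i j = F i j * b j)
    (S : Matrix (Fin n) (Fin n) ℝ)
    (hS : S = (1 - K)⁻¹ * F)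
    (A R : Matrix (Fin n) (Fin n) ℝ)
    (hA : ∀ i j, A i j = (1 - b i) * S i j * (1 - b j))
    (hR : ∀ i j, R i j = (1 - b i) * S i j * b j)
    (C : Matrix (Fin n) (Fin n) ℝ)
    (hC : C = 1 - A.transpose - R.transpose) :
    ((∀ i, 0 < 1 - b i) ∧
      C.transpose.mulVec (fun i => 1 - b i) = 0 ∧
      Matrix.vecMul (fun i => 1 - b i) C = 0 ∧
      (0 : ℝ) ∈ spectrum ℝ C) ∧
    (∀ i, 0 ≤ C i i) ∧
    (∀ i j, i ≠ j → C i j ≤ 0) := by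
  have hv : ∀ i, 0 < 1 - b i := fun i => sub_pos.mpr (hb1 i)
  have hKF : K = F * diagonal b := by ext i j; rw [hK, mul_diagonal]
  have hK0 : ∀ i j, 0 ≤ K i j := fun i j => hK i j ▸ mul_nonneg (hFnonneg i j) (hb0 j)
  have hKrow : ∀ i, ∑ j, K i j < 1 := fun i => by
    simpa only [hK] using sum_mul_lt_one_of_sum_eq_one (hFnonneg i) (hFrow i) hb1
  have hS0 : ∀ i j, 0 ≤ S i j := fun i j => by
    rw [hS, mul_apply]
    exact Finset.sum_nonneg fun k _ =>
      mul_nonneg (inv_one_sub_apply_nonneg hK0 hKrow i k) (hFnonneg k j)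
  have hSv : S *ᵥ (1 - b) = 1 := by
    have hunit := isUnit_one_sub_of_sum_lt_one hK0 hKrow
    rw [hKF] at hunit
    rw [hS, hKF]
    exact inv_one_sub_mul_diagonal_mul_mulVec_one_sub hFrow hunit
  set P := diagonal (fun i => 1 - b i) * S with hP
  have hCP : C = 1 - Pᵀ := by
    ext i j
    simp only [hC, hP, Matrix.sub_apply, transpose_apply, diagonal_mul, hA, hR]
    ring
  have hP0 : ∀ i j, 0 ≤ P i j := fun i j => by
    rw [hP, diagonal_mul]
    exact mul_nonneg (hv i).le (hS0 i j)
  have hPv : P *ᵥ (fun i => 1 - b i) = fun i => 1 - b i := diagonal_mul_mulVec_self hSv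
  have hvC : (fun i => 1 - b i) ᵥ* C = 0 := hCP ▸ vecMul_one_sub_transpose_eq_zero hPv
  refine ⟨⟨hv, by rw [mulVec_transpose, hvC], hvC, ?_⟩, fun i => ?_, fun i j hij => ?_⟩
  · exact zero_mem_spectrum_of_vecMul_eq_zero (fun h => (hv ⟨0, hn⟩).ne' (congrFun h _)) hvC
  · simpa [hCP] using apply_self_le_one_of_mulVec_eq_self hP0 hv hPv i
  · simpa [hCP, one_apply_ne hij] using hP0 j i

/-- The matrix `C = I − Aᵀ − Rᵀ` satisfies: (1) the positive
vector `v` with components `v i = 1 − b i` lies in the left kernel of `C`, i.e.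
`Cᵀ.mulVec v = 0` (equivalently `vᵀ C = 0`), so `0` is an eigenvalue of `C`;
(2) every diagonal entry satisfies `C i i ≥ 0`; and (3) every off-diagonal
entry satisfies `C i j ≤ 0` for `i ≠ j`. -/
theorem stmt_13 (n : ℕ) (hn : 1 ≤ n)
    (F : Matrix (Fin n) (Fin n) ℝ)
    (hFnonneg : ∀ i j, 0 ≤ F i j)
    (hFrow : ∀ i, ∑ j, F i j = 1)
    (b : Fin n → ℝ) (hb0 : ∀ j, 0 ≤ b j) (hb1 : ∀ j, b j < 1)
    (K : Matrix (Fin n) (Fin n) ℝ)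
    (hK : ∀ i j, K i j = F i j * b j)
    (hInv : IsUnit (1 - K))
    (S : Matrix (Fin n) (Fin n) ℝ)
    (hS : S = (1 - K)⁻¹ * F)
    (A R : Matrix (Fin n) (Fin n) ℝ)
    (hA : ∀ i j, A i j = (1 - b i) * S i j * (1 - b j))
    (hR : ∀ i j, R i j = (1 - b i) * S i j * b j)
    (C : Matrix (Fin n) (Fin n) ℝ)
    (hC : C = 1 - A.transpose - R.transpose) :
    ((∀ i, 0 < 1 - b i) ∧
      C.transpose.mulVec (fun i => 1 - b i) = 0 ∧
      Matrix.vecMul (fun i => 1 - b i) C = 0 ∧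
      (0 : ℝ) ∈ spectrum ℝ C) ∧
    (∀ i, 0 ≤ C i i) ∧
    (∀ i j, i ≠ j → C i j ≤ 0) :=
  stmt_13_general n hn F hFnonneg hFrow b hb0 hb1 K hK S hS A R hA hR C hC
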